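/- arXiv:math/9906160 — 10 statements merged into one kernel-verified Lean document; each statement's English description precedes it below -/
import Mathlib

section
/- Let p be a prime, q = p^h with h ≥ 1, and m an even non-negative integer. Then ∑_{j=1}^{(m+2)/2} (-1)^{q j} C(q·(m+2)/2 + (q-1)/2, q j) ≡ -1 (mod p), where p is odd. -/
lemma lucas_aux (p : ℕ) (hp : p.Prime) (hodd : Odd p) :
    ∀ (h n j : ℕ),
      ((Nat.choose (p ^ h * n + (p ^ h - 1) / 2) (p ^ h * j) : ZMod p)) =
        (Nat.choose n j : ZMod p) := by
  haveI : Fact p.Prime := ⟨hp⟩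
  intro h
  induction h with
  | zero => intro n j; simp
  | succ h ih =>
    intro n j
    have hp1 : 1 ≤ p := hp.one_lt.le
    have hph : 1 ≤ p ^ h := Nat.one_le_pow _ _ hp.pos
    have hodd' : Odd (p ^ (h + 1)) := hodd.pow
    have hdec : (p ^ (h + 1) - 1) / 2 = p * ((p ^ h - 1) / 2) + (p - 1) / 2 := by
      obtain ⟨b, hb⟩ := (Odd.pow hodd : Odd (p ^ h))
      obtain ⟨a, ha⟩ := hodd
      obtain ⟨c, hc⟩ : ∃ c, a * b = c := ⟨_, rfl⟩
      have hps : p ^ (h + 1) = 2 * (2 * c + a + b) + 1 := by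
        rw [pow_succ, hb, ha, ← hc]; ring
      have e1 : (p ^ (h + 1) - 1) / 2 = 2 * c + a + b := by rw [hps]; omega
      have e2 : (p ^ h - 1) / 2 = b := by rw [hb]; omega
      have e3 : (p - 1) / 2 = a := by omega
      rw [e1, e2, e3, ha, ← hc]; ring
    set N := p ^ (h + 1) * n + (p ^ (h + 1) - 1) / 2 with hN
    have hNp : N = p * (p ^ h * n + (p ^ h - 1) / 2) + (p - 1) / 2 := by
      rw [hN, hdec, pow_succ, mul_comm (p ^ h) p]; ring
    have hlt : (p - 1) / 2 < p := by omega
    have hmod : N % p = (p - 1) / 2 := by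
      rw [hNp, Nat.mul_add_mod, Nat.mod_eq_of_lt hlt]
    have hdiv : N / p = p ^ h * n + (p ^ h - 1) / 2 := by
      rw [hNp, Nat.mul_add_div hp.pos, Nat.div_eq_of_lt hlt, add_zero]
    have hKmod : (p ^ (h + 1) * j) % p = 0 := by
      rw [pow_succ, mul_comm (p ^ h) p, mul_assoc, Nat.mul_mod_right]
    have hKdiv : (p ^ (h + 1) * j) / p = p ^ h * j := by
      rw [pow_succ, mul_comm (p ^ h) p, mul_assoc, Nat.mul_div_cancel_left _ hp.pos]
    have key := Choose.choose_modEq_choose_mod_mul_choose_div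
      (n := N) (k := p ^ (h + 1) * j) (p := p)
    rw [hmod, hdiv, hKmod, hKdiv] at key
    simp only [Nat.choose_zero_right, Nat.cast_one, one_mul] at key
    have : ((Nat.choose N (p ^ (h + 1) * j) : ℤ) : ZMod p) =
        ((Nat.choose (p ^ h * n + (p ^ h - 1) / 2) (p ^ h * j) : ℤ) : ZMod p) := by
      exact_mod_cast (ZMod.intCast_eq_intCast_iff _ _ _).mpr key
    push_cast at this
    rw [this, ih]

theorem stmt_5 (p : ℕ) (hp : p.Prime) (hodd : Odd p) (h : ℕ) (hh : 1 ≤ h)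
    (q : ℕ) (hq : q = p ^ h) (m : ℕ) (hm : Even m) :
    (∑ j ∈ Finset.Icc 1 ((m + 2) / 2),
        (-1 : ZMod p) ^ (q * j) *
          (Nat.choose (q * ((m + 2) / 2) + (q - 1) / 2) (q * j) : ZMod p)) = -1 := by
  haveI : Fact p.Prime := ⟨hp⟩
  have hqodd : Odd q := hq ▸ hodd.pow
  set n := (m + 2) / 2 with hn
  have hn1 : 1 ≤ n := by
    obtain ⟨k, hk⟩ := hm; omega
  have hterm : ∀ j, (-1 : ZMod p) ^ (q * j) *
      (Nat.choose (q * n + (q - 1) / 2) (q * j) : ZMod p)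
      = (-1 : ZMod p) ^ j * (Nat.choose n j : ZMod p) := by
    intro j
    rw [pow_mul, hqodd.neg_one_pow, hq, lucas_aux p hp hodd h n j]
  rw [Finset.sum_congr rfl fun j _ => hterm j]
  -- alternating sum
  have halt : ∑ j ∈ Finset.range (n + 1), (-1 : ZMod p) ^ j * (Nat.choose n j : ZMod p) = 0 := by
    have := Int.alternating_sum_range_choose (n := n)
    rw [if_neg (by omega)] at this
    have := congrArg (fun z : ℤ => (z : ZMod p)) this
    push_cast at this
    simpa using this
  have hsplit : Finset.range (n + 1) = insert 0 (Finset.Icc 1 n) := by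
    ext x
    simp [Finset.mem_range, Finset.mem_Icc, Nat.lt_succ_iff]
    omega
  rw [hsplit, Finset.sum_insert (by simp)] at halt
  simp only [pow_zero, Nat.choose_zero_right, Nat.cast_one, one_mul] at halt
  linear_combination halt
end

section
/- Let p be an odd prime, q = p^h, r = p^k with h, k ≥ 1, and n an odd positive integer with n not divisible by p. Set η = (q-1)/2 and θ = r(n+1)/2. Then the sum ∑_{i=0}^{r-1} (-1)^{1+qi} C(η + qθ, 1 + qi) + ∑_{i=r+1}^{θ} (-1)^{qi} C(η + qθ, qi) is congruent to n/2 modulo p (i.e., to n times the inverse of 2 mod p), and in particular is nonzero modulo p. -/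
lemma lucas_aux_s6 (p : ℕ) [Fact p.Prime] (e a b c d : ℕ) (he : 1 ≤ e)
    (hc : c < p ^ e) (hd : d < p ^ e) :
    ((Nat.choose (c + p ^ e * a) (d + p ^ e * b) : ℕ) : ZMod p) =
      (Nat.choose a b : ZMod p) * (Nat.choose c d : ZMod p) := by
  have hp : (0:ℕ) < p := (Fact.out : p.Prime).pos
  have h1 := Choose.choose_modEq_choose_mul_prod_range_choose
    (p := p) (n := c + p ^ e * a) (k := d + p ^ e * b) e
  have h2 := Choose.choose_modEq_prod_range_choose (p := p) (n := c) (k := d) (a := e) hc hd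
  have hdiv : ∀ x y : ℕ, y < p ^ e → (y + p ^ e * x) / p ^ e = x := by
    intro x y hy
    rw [Nat.add_mul_div_left _ _ (pow_pos hp e), Nat.div_eq_of_lt hy, zero_add]
  have hmod : ∀ x y i : ℕ, i < e → (y + p ^ e * x) / p ^ i % p = y / p ^ i % p := by
    intro x y i hi
    have hpe : p ^ e * x = p ^ i * (p ^ (e - i - 1) * x * p) := by
      have h1 : i + (e - i - 1) + 1 = e := by omega
      calc p ^ e * x = p ^ (i + (e - i - 1) + 1) * x := by rw [h1]
        _ = (p ^ i * p ^ (e - i - 1) * p) * x := by rw [pow_succ, pow_add]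
        _ = p ^ i * (p ^ (e - i - 1) * x * p) := by ring
    rw [hpe, Nat.add_mul_div_left _ _ (pow_pos hp i), Nat.add_mul_mod_self_right]
  rw [hdiv a c hc, hdiv b d hd] at h1
  have hprodeq : ∀ i ∈ Finset.range e,
      (Nat.choose ((c + p ^ e * a) / p ^ i % p) ((d + p ^ e * b) / p ^ i % p) : ℤ) =
      (Nat.choose (c / p ^ i % p) (d / p ^ i % p) : ℤ) := by
    intro i hi
    rw [hmod a c i (Finset.mem_range.mp hi), hmod b d i (Finset.mem_range.mp hi)]
  have h3 : (Nat.choose (c + p ^ e * a) (d + p ^ e * b) : ℤ) ≡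
      (Nat.choose a b : ℤ) * (Nat.choose c d : ℤ) [ZMOD p] := by
    have h1' : (Nat.choose (c + p ^ e * a) (d + p ^ e * b) : ℤ) ≡
        (Nat.choose a b : ℤ) *
          ∏ i ∈ Finset.range e, (Nat.choose (c / p ^ i % p) (d / p ^ i % p) : ℤ) [ZMOD p] := by
      have := h1
      push_cast at this ⊢
      rw [Finset.prod_congr rfl hprodeq] at this
      exact this
    refine h1'.trans ?_
    exact Int.ModEq.mul_left _ (by push_cast at h2 ⊢; exact h2.symm)
  have := (ZMod.intCast_eq_intCast_iff _ _ _).mpr h3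
  push_cast at this ⊢
  exact this

lemma alt_sum {p : ℕ} (N : ℕ) : ∀ m : ℕ,
    ∑ i ∈ Finset.range (m + 1), (-1 : ZMod p) ^ i * ((N + 1).choose i : ZMod p) =
      (-1 : ZMod p) ^ m * (N.choose m : ZMod p) := by
  intro m
  induction m with
  | zero => simp
  | succ m ih =>
    rw [Finset.sum_range_succ, ih, Nat.choose_succ_succ]
    push_cast
    ring

theorem stmt_6 (p : ℕ) (hp : p.Prime) (hodd : Odd p) (h k : ℕ) (hh : 1 ≤ h) (hk : 1 ≤ k)
    (q r : ℕ) (hq : q = p ^ h) (hr : r = p ^ k)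
    (n : ℕ) (hn : 0 < n) (hnodd : Odd n) (hnp : ¬ p ∣ n)
    (eta theta : ℕ) (heta : eta = (q - 1) / 2) (htheta : theta = r * (n + 1) / 2) :
    (∑ i ∈ Finset.range r,
        (-1 : ZMod p) ^ (1 + q * i) *
          (Nat.choose (eta + q * theta) (1 + q * i) : ZMod p))
      + (∑ i ∈ Finset.Icc (r + 1) theta,
          (-1 : ZMod p) ^ (q * i) *
            (Nat.choose (eta + q * theta) (q * i) : ZMod p))
      = (n : ZMod p) * (2 : ZMod p)⁻¹ ∧
    (∑ i ∈ Finset.range r,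
        (-1 : ZMod p) ^ (1 + q * i) *
          (Nat.choose (eta + q * theta) (1 + q * i) : ZMod p))
      + (∑ i ∈ Finset.Icc (r + 1) theta,
          (-1 : ZMod p) ^ (q * i) *
            (Nat.choose (eta + q * theta) (q * i) : ZMod p)) ≠ 0 := by
  haveI : Fact p.Prime := ⟨hp⟩
  obtain ⟨t, ht⟩ := hnodd
  have hp2 : p ≠ 2 := by rintro rfl; exact (by norm_num : ¬ Odd 2) hodd
  have hp3 : 3 ≤ p := by have := hp.two_le; omega
  have hq1 : 1 < q := by rw [hq]; exact Nat.one_lt_pow (by omega) hp.one_lt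
  have hr1 : 1 < r := by rw [hr]; exact Nat.one_lt_pow (by omega) hp.one_lt
  obtain ⟨u, hu⟩ : Odd q := by rw [hq]; exact hodd.pow
  obtain ⟨v, hv⟩ : Odd r := by rw [hr]; exact hodd.pow
  have htheta' : theta = r * (t + 1) := by subst htheta ht; ring_nf; omega
  have hthsum : theta = r + r * t := by rw [htheta']; ring
  have hth1 : 1 ≤ theta := by omega
  have heta2 : 2 * eta = q - 1 := by omega
  -- casts
  have h2ne : (2 : ZMod p) ≠ 0 := by
    have : ((2 : ℕ) : ZMod p) ≠ 0 := by
      rw [Ne, ZMod.natCast_eq_zero_iff]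
      intro hd
      exact hp2 ((Nat.prime_dvd_prime_iff_eq hp Nat.prime_two).mp hd)
    simpa using this
  have hq0 : ((q : ℕ) : ZMod p) = 0 := by
    rw [hq]; push_cast [ZMod.natCast_self]; exact zero_pow (by omega)
  have hetacast : (2 : ZMod p) * (eta : ZMod p) = -1 := by
    have : ((2 * eta : ℕ) : ZMod p) = ((q - 1 : ℕ) : ZMod p) := by rw [heta2]
    rw [Nat.cast_sub (by omega), hq0] at this
    push_cast at this
    rw [this]; ring
  -- Lucas reductions
  have hEtaLt : eta < p ^ h := by rw [← hq]; omega
  have h1lt : 1 < p ^ h := by rw [← hq]; omega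
  have key1 : ∀ i : ℕ, ((eta + q * theta).choose (1 + q * i) : ZMod p)
      = (theta.choose i : ZMod p) * (eta : ZMod p) := by
    intro i
    have := lucas_aux_s6 p h theta i eta 1 hh hEtaLt h1lt
    rw [hq]
    simpa [Nat.choose_one_right] using this
  have key2 : ∀ i : ℕ, ((eta + q * theta).choose (q * i) : ZMod p)
      = (theta.choose i : ZMod p) := by
    intro i
    have := lucas_aux_s6 p h theta i eta 0 hh hEtaLt (by omega)
    rw [hq]
    have e0 : 0 + p ^ h * i = p ^ h * i := by ring
    rw [e0] at this
    simpa using this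
  have hsign : ∀ i : ℕ, (-1 : ZMod p) ^ (q * i) = (-1 : ZMod p) ^ i := by
    intro i
    rw [pow_mul, Odd.neg_one_pow ⟨u, hu⟩]
  -- the two binomial values
  have hC1 : (((theta - 1).choose (r - 1) : ℕ) : ZMod p) = 1 := by
    have := lucas_aux_s6 p k t 0 (r - 1) (r - 1) hk (by omega) (by omega)
    rw [← hr] at this
    have e1 : theta - 1 = r - 1 + r * t := by omega
    have e2 : r - 1 + r * 0 = r - 1 := by ring_nf
    rw [e2] at this
    rw [e1]
    simpa using this
  have hC2 : (((theta - 1).choose r : ℕ) : ZMod p) = (t : ZMod p) := by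
    have := lucas_aux_s6 p k t 1 (r - 1) 0 hk (by omega) (by omega)
    rw [← hr] at this
    have e1 : theta - 1 = r - 1 + r * t := by omega
    have e2 : 0 + r * 1 = r := by ring_nf
    rw [e2] at this
    rw [e1]
    simpa using this
  -- first sum
  have hF : (∑ i ∈ Finset.range r, (-1 : ZMod p) ^ (1 + q * i) *
      (Nat.choose (eta + q * theta) (1 + q * i) : ZMod p))
      = -(eta : ZMod p) * ∑ i ∈ Finset.range r, (-1 : ZMod p) ^ i * (theta.choose i : ZMod p) := by
    rw [Finset.mul_sum]
    refine Finset.sum_congr rfl fun i _ => ?_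
    rw [key1 i, pow_add, hsign i]
    ring
  have hAr : (∑ i ∈ Finset.range r, (-1 : ZMod p) ^ i * (theta.choose i : ZMod p))
      = ((theta - 1).choose (r - 1) : ZMod p) := by
    have := alt_sum (p := p) (theta - 1) (r - 1)
    rw [show theta - 1 + 1 = theta from by omega, show r - 1 + 1 = r from by omega] at this
    rw [this, Even.neg_one_pow (⟨v, by omega⟩ : Even (r - 1)), one_mul]
  -- second sum
  have hT : (∑ i ∈ Finset.Icc (r + 1) theta, (-1 : ZMod p) ^ (q * i) *
      (Nat.choose (eta + q * theta) (q * i) : ZMod p))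
      = ((theta - 1).choose r : ZMod p) := by
    have step : ∀ i ∈ Finset.Icc (r + 1) theta,
        (-1 : ZMod p) ^ (q * i) * (Nat.choose (eta + q * theta) (q * i) : ZMod p)
        = (-1 : ZMod p) ^ i * (theta.choose i : ZMod p) := fun i _ => by
      rw [key2 i, hsign i]
    rw [Finset.sum_congr rfl step, ← Finset.Ico_add_one_right_eq_Icc,
      Finset.sum_Ico_eq_sub _ (by omega : r + 1 ≤ theta + 1)]
    have hA1 := alt_sum (p := p) (theta - 1) theta
    rw [show theta - 1 + 1 = theta from by omega,
      Nat.choose_eq_zero_of_lt (by omega : theta - 1 < theta)] at hA1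
    have hA2 := alt_sum (p := p) (theta - 1) r
    rw [show theta - 1 + 1 = theta from by omega] at hA2
    rw [hA1, hA2, Odd.neg_one_pow ⟨v, hv⟩]
    push_cast
    ring
  have hne : (n : ZMod p) * (2 : ZMod p)⁻¹ ≠ 0 := by
    refine mul_ne_zero ?_ (inv_ne_zero h2ne)
    rw [Ne, ZMod.natCast_eq_zero_iff]
    exact hnp
  have hmain : (∑ i ∈ Finset.range r, (-1 : ZMod p) ^ (1 + q * i) *
      (Nat.choose (eta + q * theta) (1 + q * i) : ZMod p))
      + (∑ i ∈ Finset.Icc (r + 1) theta, (-1 : ZMod p) ^ (q * i) *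
          (Nat.choose (eta + q * theta) (q * i) : ZMod p))
      = (n : ZMod p) * (2 : ZMod p)⁻¹ := by
    rw [hF, hAr, hT, hC1, hC2]
    have hninv : (n : ZMod p) = 2 * t + 1 := by rw [ht]; push_cast; ring
    have hinveq : (2 : ZMod p)⁻¹ = -(eta : ZMod p) :=
      inv_eq_of_mul_eq_one_right (by linear_combination -hetacast)
    rw [hninv, hinveq]
    linear_combination (t : ZMod p) * hetacast
  exact ⟨hmain, hmain ▸ hne⟩
end

section
/- Let p be an odd prime, q = p^h and r = p^k with h, k ≥ 1. Then ∑_{i=0}^{r-2} (-1)^{2q-2+qi} C(q(r+1)-1, 2q-2+qi) ≡ 0 (mod p). -/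
theorem stmt_7 (p : ℕ) (hp : p.Prime) (hodd : Odd p) (h k : ℕ) (hh : 1 ≤ h) (hk : 1 ≤ k)
    (q r : ℕ) (hq : q = p ^ h) (hr : r = p ^ k) :
    (∑ i ∈ Finset.range (r - 1),
        (-1 : ZMod p) ^ (2 * q - 2 + q * i) *
          (Nat.choose (q * (r + 1) - 1) (2 * q - 2 + q * i) : ZMod p)) = 0 := by
  haveI : Fact p.Prime := ⟨hp⟩
  have hp3 : 3 ≤ p := by
    rcases hodd with ⟨m, hm⟩
    have := hp.two_le
    omega
  have hqa : 3 ≤ q := by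
    subst hq
    calc 3 ≤ p := hp3
    _ = p ^ 1 := (pow_one p).symm
    _ ≤ p ^ h := Nat.pow_le_pow_right (by omega) hh
  apply Finset.sum_eq_zero
  intro i hi
  rw [Finset.mem_range] at hi
  have hra : 3 ≤ r := by
    subst hr
    calc 3 ≤ p := hp3
    _ = p ^ 1 := (pow_one p).symm
    _ ≤ p ^ k := Nat.pow_le_pow_right (by omega) hk
  -- rewrite N and M in quotient-remainder form w.r.t. p^h = q
  have hqi : q * i = q * i := rfl
  have hN : q * (r + 1) - 1 = q * r + (q - 1) := by
    have : q * (r + 1) = q * r + q := by ring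
    omega
  have hM : 2 * q - 2 + q * i = q * (i + 1) + (q - 2) := by
    have : q * (i + 1) = q * i + q := by ring
    omega
  suffices hz : (Nat.choose (q * (r + 1) - 1) (2 * q - 2 + q * i) : ZMod p) = 0 by
    rw [hz, mul_zero]
  have lucas := Choose.choose_modEq_choose_mul_prod_range_choose
    (n := q * (r + 1) - 1) (k := 2 * q - 2 + q * i) (p := p) h
  have hdivN : (q * (r + 1) - 1) / p ^ h = r := by
    rw [hN, hq, Nat.mul_add_div (by positivity)]
    have : (p ^ h - 1) / p ^ h = 0 := Nat.div_eq_of_lt (by omega)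
    omega
  have hdivM : (2 * q - 2 + q * i) / p ^ h = i + 1 := by
    rw [hM, hq, Nat.mul_add_div (by positivity)]
    have : (p ^ h - 2) / p ^ h = 0 := Nat.div_eq_of_lt (by omega)
    omega
  rw [hdivN, hdivM] at lucas
  have hdvd : p ∣ r.choose (i + 1) := by
    rw [hr]
    exact Nat.Prime.dvd_choose_pow hp (by omega) (by omega)
  have : ((Nat.choose (q * (r + 1) - 1) (2 * q - 2 + q * i) : ℤ) : ZMod p) =
      ((r.choose (i + 1) * ∏ j ∈ Finset.range h,
        Nat.choose ((q * (r + 1) - 1) / p ^ j % p) ((2 * q - 2 + q * i) / p ^ j % p) : ℤ) : ZMod p) :=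
    (ZMod.intCast_eq_intCast_iff _ _ _).mpr lucas
  push_cast at this
  rw [this]
  have : (r.choose (i + 1) : ZMod p) = 0 := (ZMod.natCast_eq_zero_iff _ _).mpr hdvd
  rw [this, zero_mul]
end

section
/- Let p be an odd prime, q = p^h and r = p^k with h, k ≥ 1. Then ∑_{i=0}^{r-1} (-1)^{q-1+qi} C(q(r+1)-1, q-1+qi) ≡ 1 (mod p) and ∑_{i=1}^{r} (-1)^{qi} C(q(r+1)-1, qi) ≡ -1 (mod p). -/
open Finset

private lemma div_mod_eq {p : ℕ} (hp : 1 < p) (j a : ℕ) (ha : 0 < a) :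
    (p ^ (j + 1) * a - 1) / p ^ j % p = p - 1 := by
  have hpj : 0 < p ^ j := Nat.pow_pos (by omega)
  have hlt : p ^ j - 1 < p ^ j := by omega
  have hc : p ^ (j + 1) * a = p ^ j * (p * a) := by ring
  have hd : p ^ j ≤ p ^ j * (p * a) := Nat.le_mul_of_pos_right _ (by positivity)
  have h1 : p ^ (j + 1) * a - 1 = p ^ j * (p * a - 1) + (p ^ j - 1) := by
    rw [hc, Nat.mul_sub, mul_one]
    omega
  rw [h1, Nat.mul_add_div hpj, Nat.div_eq_of_lt hlt, Nat.add_zero]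
  have h2 : p * a - 1 = p * (a - 1) + (p - 1) := by
    have hpa : p ≤ p * a := Nat.le_mul_of_pos_right _ ha
    have : p * a = p * (a - 1) + p := by rw [Nat.mul_sub, mul_one]; omega
    omega
  rw [h2, Nat.mul_add_mod, Nat.mod_eq_of_lt (by omega)]

private lemma div_pow_eq {p : ℕ} (hp : 1 < p) (h a : ℕ) (ha : 0 < a) :
    (p ^ h * a - 1) / p ^ h = a - 1 := by
  have hpj : 0 < p ^ h := Nat.pow_pos (by omega)
  have hlt : p ^ h - 1 < p ^ h := by omega
  have hd : p ^ h ≤ p ^ h * a := Nat.le_mul_of_pos_right _ ha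
  have h1 : p ^ h * a - 1 = p ^ h * (a - 1) + (p ^ h - 1) := by
    rw [Nat.mul_sub, mul_one]
    omega
  rw [h1, Nat.mul_add_div hpj, Nat.div_eq_of_lt hlt, Nat.add_zero]

private lemma div_mod_zero {p : ℕ} (hp : 1 < p) {j h : ℕ} (hj : j < h) (i : ℕ) :
    p ^ h * i / p ^ j % p = 0 := by
  obtain ⟨t, rfl⟩ : ∃ t, h = j + 1 + t := ⟨h - j - 1, by omega⟩
  have e1 : p ^ (j + 1 + t) * i = p ^ j * (p * (p ^ t * i)) := by
    rw [pow_add, pow_add, pow_one]; ring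
  rw [e1, Nat.mul_div_cancel_left _ (Nat.pow_pos (by omega)), Nat.mul_mod_right]

private lemma div_pow_self {p : ℕ} (hp : 1 < p) (h i : ℕ) : p ^ h * i / p ^ h = i :=
  Nat.mul_div_cancel_left _ (Nat.pow_pos (by omega))

private lemma digit_pm1 {p : ℕ} (hp : 1 < p) {j h : ℕ} (hj : j < h) {a : ℕ} (ha : 0 < a) :
    (p ^ h * a - 1) / p ^ j % p = p - 1 := by
  obtain ⟨t, rfl⟩ : ∃ t, h = j + 1 + t := ⟨h - j - 1, by omega⟩
  have e1 : p ^ (j + 1 + t) * a = p ^ (j + 1) * (p ^ t * a) := by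
    rw [pow_add]; ring
  rw [e1]
  exact div_mod_eq hp j _ (by positivity)

private lemma key_reduce {p : ℕ} [Fact p.Prime] (h N m : ℕ)
    (hfac : ∀ j < h, Nat.choose (N / p ^ j % p) (m / p ^ j % p) = 1) :
    (Nat.choose N m : ZMod p) = (Nat.choose (N / p ^ h) (m / p ^ h) : ZMod p) := by
  have H := Choose.choose_modEq_choose_mul_prod_range_choose (n := N) (k := m) (p := p) h
  have hprod : (∏ j ∈ range h, Nat.choose (N / p ^ j % p) (m / p ^ j % p)) = 1 :=
    Finset.prod_eq_one fun j hj => hfac j (mem_range.mp hj)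
  have H2 : ((Nat.choose N m : ℤ) : ZMod p)
      = (((Nat.choose (N / p ^ h) (m / p ^ h) *
          ∏ j ∈ range h, Nat.choose (N / p ^ j % p) (m / p ^ j % p) : ℕ) : ℤ) : ZMod p) := by
    exact_mod_cast (ZMod.intCast_eq_intCast_iff _ _ _).mpr H
  rw [hprod, mul_one] at H2
  exact_mod_cast H2

theorem stmt_8 (p : ℕ) (hp : p.Prime) (hodd : Odd p) (h k : ℕ) (hh : 1 ≤ h) (hk : 1 ≤ k)
    (q r : ℕ) (hq : q = p ^ h) (hr : r = p ^ k) :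
    (∑ i ∈ Finset.range r,
        (-1 : ZMod p) ^ (q - 1 + q * i) *
          (Nat.choose (q * (r + 1) - 1) (q - 1 + q * i) : ZMod p)) = 1 ∧
    (∑ i ∈ Finset.Icc 1 r,
        (-1 : ZMod p) ^ (q * i) *
          (Nat.choose (q * (r + 1) - 1) (q * i) : ZMod p)) = -1 := by
  have hFact : Fact p.Prime := ⟨hp⟩
  have hp1 : 1 < p := hp.one_lt
  have hq1 : 1 < q := by rw [hq]; exact Nat.one_lt_pow (by omega) hp1
  have hr1 : 1 < r := by rw [hr]; exact Nat.one_lt_pow (by omega) hp1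
  have hqodd : Odd q := hq ▸ hodd.pow
  have hrodd : Odd r := hr ▸ hodd.pow
  -- key congruences
  have key1 : ∀ i : ℕ,
      ((Nat.choose (q * (r + 1) - 1) (q - 1 + q * i)) : ZMod p) = (Nat.choose r i : ZMod p) := by
    intro i
    have em : q - 1 + q * i = q * (i + 1) - 1 := by
      have : q * (i + 1) = q * i + q := by ring
      omega
    rw [em, hq]
    rw [key_reduce (p := p) h _ _ (by
      intro j hj
      rw [digit_pm1 hp1 hj (by omega), digit_pm1 hp1 hj (by omega), Nat.choose_self])]
    rw [div_pow_eq hp1 _ _ (by omega), div_pow_eq hp1 _ _ (by omega)]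
    simp
  have key2 : ∀ i : ℕ,
      ((Nat.choose (q * (r + 1) - 1) (q * i)) : ZMod p) = (Nat.choose r i : ZMod p) := by
    intro i
    rw [hq]
    rw [key_reduce (p := p) h _ _ (by
      intro j hj
      rw [digit_pm1 hp1 hj (by omega), div_mod_zero hp1 hj, Nat.choose_zero_right])]
    rw [div_pow_eq hp1 _ _ (by omega), div_pow_self hp1]
    simp
  have hvanish : ∀ i : ℕ, i ≠ 0 → i ≠ r → (Nat.choose r i : ZMod p) = 0 := by
    intro i hi0 hir
    rw [ZMod.natCast_eq_zero_iff]
    exact hr ▸ hp.dvd_choose_pow hi0 (by rw [← hr]; exact hir)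
  constructor
  · rw [Finset.sum_eq_single 0]
    · rw [key1 0, Nat.choose_zero_right, Nat.cast_one, mul_one]
      exact Even.neg_one_pow (Nat.Odd.sub_odd hqodd odd_one)
    · intro b hb hb0
      rw [key1 b, hvanish b hb0 (by have := mem_range.mp hb; omega), mul_zero]
    · intro habs
      exact absurd (mem_range.mpr (by omega)) habs
  · rw [Finset.sum_eq_single r]
    · rw [key2 r, Nat.choose_self, Nat.cast_one, mul_one]
      exact Odd.neg_one_pow (hqodd.mul hrodd)
    · intro b hb hbr
      have hb1 := (mem_Icc.mp hb).1
      rw [key2 b, hvanish b (by omega) hbr, mul_zero]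
    · intro habs
      exact absurd (mem_Icc.mpr ⟨by omega, le_refl r⟩) habs
end

section
/- Let p be a prime, q = p^h, r = p^k with h, k ≥ 1, and σ an integer with 0 ≤ σ ≤ r - 2. Then ∑_{i=0}^{σ-1} (-1)^{qi} C(qr - 1, qi) + ∑_{i=σ+1}^{r-1} (-1)^{qi} C(qr - 1, qi) ≡ -(-1)^σ C(r-1, σ) (mod p), and this is congruent to ±1 modulo p (in particular nonzero). -/
lemma choose_pow_sub_one_cast (p : ℕ) (hp : p.Prime) (n j : ℕ) (hj : j ≤ p ^ n - 1) :
    ((Nat.choose (p ^ n - 1) j : ℕ) : ZMod p) = (-1) ^ j := by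
  induction j with
  | zero => simp
  | succ j ih =>
    have hpos : 0 < p ^ n := pow_pos hp.pos n
    have hps : p ^ n - 1 + 1 = p ^ n := Nat.succ_pred_eq_of_pos hpos
    have hdvd : p ∣ Nat.choose (p ^ n) (j + 1) :=
      hp.dvd_choose_pow (Nat.succ_ne_zero j) (by omega)
    have hsum : Nat.choose (p ^ n) (j + 1)
        = Nat.choose (p ^ n - 1) j + Nat.choose (p ^ n - 1) (j + 1) := by
      rw [← hps]; exact Nat.choose_succ_succ _ _
    have h0 : ((Nat.choose (p ^ n) (j + 1) : ℕ) : ZMod p) = 0 :=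
      (ZMod.natCast_eq_zero_iff _ _).mpr hdvd
    rw [hsum] at h0
    push_cast at h0
    rw [ih (by omega)] at h0
    rw [pow_succ]
    linear_combination h0

theorem stmt_9 (p : ℕ) (hp : p.Prime) (h k : ℕ) (hh : 1 ≤ h) (hk : 1 ≤ k)
    (q r : ℕ) (hq : q = p ^ h) (hr : r = p ^ k)
    (σ : ℕ) (hσ : σ ≤ r - 2) :
    (∑ i ∈ Finset.range σ,
        (-1 : ZMod p) ^ (q * i) * (Nat.choose (q * r - 1) (q * i) : ZMod p))
      + (∑ i ∈ Finset.Icc (σ + 1) (r - 1),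
          (-1 : ZMod p) ^ (q * i) * (Nat.choose (q * r - 1) (q * i) : ZMod p))
      = -((-1 : ZMod p) ^ σ * (Nat.choose (r - 1) σ : ZMod p)) ∧
    (-((-1 : ZMod p) ^ σ * (Nat.choose (r - 1) σ : ZMod p)) = 1 ∨
     -((-1 : ZMod p) ^ σ * (Nat.choose (r - 1) σ : ZMod p)) = -1) := by
  have hp2 : 2 ≤ p := hp.two_le
  have hr2 : 2 ≤ r := by
    rw [hr]; calc 2 ≤ p := hp2
    _ ≤ p ^ k := Nat.le_self_pow (by omega) p
  have hq1 : 1 ≤ q := by rw [hq]; exact Nat.one_le_pow _ _ hp.pos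
  have hqr : q * r = p ^ (h + k) := by rw [hq, hr, pow_add]
  have hterm : ∀ i ≤ r - 1,
      (-1 : ZMod p) ^ (q * i) * (Nat.choose (q * r - 1) (q * i) : ZMod p) = 1 := by
    intro i hi
    have hle : q * i ≤ q * r - 1 := by
      have : q * i ≤ q * (r - 1) := Nat.mul_le_mul_left q hi
      have h2 : q * (r - 1) = q * r - q := by rw [Nat.mul_sub, mul_one]
      omega
    rw [hqr] at hle ⊢
    rw [choose_pow_sub_one_cast p hp _ _ hle, ← pow_add, ← two_mul, pow_mul]
    norm_num
  have hRHS : -((-1 : ZMod p) ^ σ * (Nat.choose (r - 1) σ : ZMod p)) = -1 := by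
    have : (Nat.choose (r - 1) σ : ZMod p) = (-1) ^ σ := by
      rw [hr]; exact choose_pow_sub_one_cast p hp _ _ (by omega)
    rw [this, ← pow_add, ← two_mul, pow_mul]; norm_num
  refine ⟨?_, Or.inr hRHS⟩
  rw [hRHS]
  rw [Finset.sum_congr rfl (fun i hi => hterm i (by
      simp only [Finset.mem_range] at hi; omega)),
    Finset.sum_congr rfl (fun i hi => hterm i (by
      simp only [Finset.mem_Icc] at hi; omega))]
  simp only [Finset.sum_const, Finset.card_range, Nat.card_Icc, nsmul_eq_mul, mul_one]
  have hc : σ + (r - 1 + 1 - (σ + 1)) = r - 1 := by omega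
  have hrp : (r : ZMod p) = 0 := by
    rw [hr]; push_cast; rw [ZMod.natCast_self]; exact zero_pow (by omega)
  have : ((σ : ZMod p)) + ((r - 1 + 1 - (σ + 1) : ℕ) : ZMod p) = ((r - 1 : ℕ) : ZMod p) := by
    rw [← Nat.cast_add, hc]
  rw [this, Nat.cast_sub (by omega), hrp]
  ring
end

section
/- Let p be an odd prime, q = p^h with h ≥ 1, and β with 0 ≤ β < h, and set λ = q(r+1) + q - p^β - 1 where r = p^k, k ≥ 1. Then (-1)^{p^β - 1} C(λ, p^β - 1) ≡ 1 (mod p) and (-1)^{p^β} C(λ, p^β) ≡ 2 (mod p). -/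
lemma aux_div (a b : ℕ) (ha : 0 < a) : (a * b - 1) / a = b - 1 := by
  rcases b with _ | n
  · simp
  · rw [Nat.mul_succ, Nat.add_sub_assoc (by omega), Nat.mul_add_div ha,
      Nat.div_eq_of_lt (by omega)]
    omega

lemma aux_mod (a b : ℕ) (ha : 0 < a) (hb : 0 < b) : (a * b - 1) % a = a - 1 := by
  rcases b with _ | n
  · omega
  · rw [Nat.mul_succ, Nat.add_sub_assoc (by omega), Nat.mul_add_mod,
      Nat.mod_eq_of_lt (by omega)]

lemma lam_digit (p A β : ℕ) (hp2 : 2 ≤ p) (i : ℕ) (hi : i ≤ β) :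
    (p ^ (β + 1) * A + (p * p ^ β - p ^ β - 1)) / p ^ i % p
      = if i = β then p - 2 else p - 1 := by
  have hpi : 0 < p ^ i := Nat.pow_pos (by omega)
  have hC1 : 1 ≤ (p - 1) * p ^ (β - i) :=
    Nat.mul_pos (by omega) (Nat.pow_pos (by omega))
  -- rewrite the low part
  have hL : p * p ^ β - p ^ β - 1 = p ^ i * ((p - 1) * p ^ (β - i)) - 1 := by
    have h1 : p ^ i * ((p - 1) * p ^ (β - i)) = (p - 1) * p ^ β := by
      rw [mul_left_comm, ← pow_add, Nat.add_sub_cancel' hi]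
    have h2 : (p - 1) * p ^ β = p * p ^ β - p ^ β := Nat.sub_one_mul p (p ^ β)
    omega
  have hsplit : p ^ (β + 1) * A = p ^ i * (p ^ (β + 1 - i) * A) := by
    rw [← mul_assoc, ← pow_add]
    congr 2
    omega
  have hcomb : p ^ (β + 1) * A + (p * p ^ β - p ^ β - 1)
      = p ^ i * (p ^ (β + 1 - i) * A + (p - 1) * p ^ (β - i)) - 1 := by
    rw [hL, hsplit, mul_add]
    have : 1 ≤ p ^ i * ((p - 1) * p ^ (β - i)) :=
      Nat.mul_pos (Nat.pow_pos (by omega)) hC1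
    omega
  rw [hcomb, aux_div _ _ hpi]
  by_cases hiβ : i = β
  · subst hiβ
    simp only [if_pos rfl]
    have e1 : i + 1 - i = 1 := by omega
    have e2 : i - i = 0 := by omega
    rw [e1, e2, pow_one, pow_zero, mul_one]
    have : p * A + (p - 1) - 1 = p * A + (p - 2) := by omega
    rw [this, Nat.mul_add_mod, Nat.mod_eq_of_lt (by omega : p - 2 < p)]
    simp
  · simp only [if_neg hiβ]
    obtain ⟨j, hj⟩ : ∃ j, β - i = j + 1 := ⟨β - i - 1, by omega⟩
    have e2 : β + 1 - i = j + 2 := by omega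
    rw [e2, hj]
    have hX : p ^ (j + 2) * A + (p - 1) * p ^ (j + 1)
        = p * (p ^ (j + 1) * A + (p - 1) * p ^ j) := by ring
    rw [hX]
    have hZ : 0 < p ^ (j + 1) * A + (p - 1) * p ^ j := by
      have : 1 ≤ (p - 1) * p ^ j := Nat.mul_pos (by omega) (Nat.pow_pos (by omega))
      omega
    exact aux_mod p _ (by omega) hZ

lemma pow_sub_one_digit (p β i : ℕ) (hp2 : 2 ≤ p) (hi : i < β) :
    (p ^ β - 1) / p ^ i % p = p - 1 := by
  have hpi : 0 < p ^ i := Nat.pow_pos (by omega)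
  have h1 : p ^ β - 1 = p ^ i * p ^ (β - i) - 1 := by
    rw [← pow_add, Nat.add_sub_cancel' hi.le]
  rw [h1, aux_div _ _ hpi]
  obtain ⟨j, hj⟩ : ∃ j, β - i = j + 1 := ⟨β - i - 1, by omega⟩
  rw [hj, pow_succ]
  have : p ^ j * p - 1 = p * p ^ j - 1 := by ring_nf
  rw [this]
  exact aux_mod p _ (by omega) (Nat.pow_pos (by omega))

lemma pow_digit (p β i : ℕ) (hp2 : 2 ≤ p) (hi : i < β) :
    p ^ β / p ^ i % p = 0 := by
  rw [Nat.pow_div hi.le (by omega)]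
  obtain ⟨j, hj⟩ : ∃ j, β - i = j + 1 := ⟨β - i - 1, by omega⟩
  rw [hj, pow_succ]
  exact Nat.mul_mod_left _ _

theorem stmt_10 (p : ℕ) (hp : p.Prime) (hodd : Odd p) (h k β : ℕ)
    (hh : 1 ≤ h) (hk : 1 ≤ k) (hβ : β < h)
    (q r lam : ℕ) (hq : q = p ^ h) (hr : r = p ^ k)
    (hlam : lam = q * (r + 1) + q - p ^ β - 1) :
    (-1 : ZMod p) ^ (p ^ β - 1) * (Nat.choose lam (p ^ β - 1) : ZMod p) = 1 ∧
    (-1 : ZMod p) ^ (p ^ β) * (Nat.choose lam (p ^ β) : ZMod p) = 2 := by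
  haveI : Fact p.Prime := ⟨hp⟩
  have hp2 : 2 ≤ p := hp.two_le
  have hE1 : 1 ≤ p ^ β := Nat.one_le_pow _ _ (by omega)
  have hEp : p ^ β < p ^ (β + 1) := by
    have := Nat.pow_lt_pow_succ (show 1 < p by omega) (n := β)
    exact this
  -- decompose lam
  obtain ⟨A, hA⟩ : ∃ A, lam = p ^ (β + 1) * A + (p * p ^ β - p ^ β - 1) := by
    refine ⟨p ^ (h - (β + 1)) * (p ^ k + 2) - 1, ?_⟩
    obtain ⟨M', hM'⟩ : ∃ M', p ^ (h - (β + 1)) * (p ^ k + 2) = M' + 1 := by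
      refine ⟨p ^ (h - (β + 1)) * (p ^ k + 2) - 1, ?_⟩
      have : 1 ≤ p ^ (h - (β + 1)) * (p ^ k + 2) :=
        Nat.mul_pos (Nat.pow_pos (by omega)) (by omega)
      omega
    have h1 : p ^ h * (p ^ k + 1) + p ^ h = p ^ (β + 1) * M' + p ^ (β + 1) := by
      calc p ^ h * (p ^ k + 1) + p ^ h
          = p ^ (β + 1) * (p ^ (h - (β + 1)) * (p ^ k + 2)) := by
            rw [← mul_assoc, ← pow_add]
            have e : β + 1 + (h - (β + 1)) = h := by omega
            rw [e]; ring
        _ = p ^ (β + 1) * (M' + 1) := by rw [hM']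
        _ = p ^ (β + 1) * M' + p ^ (β + 1) := by ring
    have hpE : p ^ (β + 1) = p * p ^ β := by rw [pow_succ]; ring
    have hge : p ^ β + 1 ≤ p * p ^ β := by
      have : 2 * p ^ β ≤ p * p ^ β := Nat.mul_le_mul_right _ hp2
      omega
    rw [hlam, hq, hr, hM']
    simp only [Nat.add_sub_cancel]
    omega
  -- Lucas for k = p^β - 1
  have hlt1 : p ^ β - 1 < p ^ (β + 1) := by omega
  have hlt1' : p ^ β - 1 < p ^ β := by omega
  have luc1 := Choose.choose_modEq_choose_mul_prod_range_choose
    (p := p) (n := lam) (k := p ^ β - 1) (β + 1)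
  have h1 : ((Nat.choose lam (p ^ β - 1) : ℤ) : ZMod p)
      = ((Nat.choose (lam / p ^ (β + 1)) ((p ^ β - 1) / p ^ (β + 1)) *
          ∏ i ∈ Finset.range (β + 1),
            Nat.choose (lam / p ^ i % p) ((p ^ β - 1) / p ^ i % p) : ℤ) : ZMod p) :=
    (ZMod.intCast_eq_intCast_iff _ _ _).mpr luc1
  push_cast at h1
  rw [Finset.prod_range_succ] at h1
  rw [Nat.div_eq_of_lt hlt1, Nat.choose_zero_right] at h1
  rw [Nat.div_eq_of_lt hlt1', Nat.zero_mod, Nat.choose_zero_right] at h1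
  have hprod1 : ∏ i ∈ Finset.range β,
      ((Nat.choose (lam / p ^ i % p) ((p ^ β - 1) / p ^ i % p) : ZMod p)) = 1 := by
    apply Finset.prod_eq_one
    intro i hi
    rw [Finset.mem_range] at hi
    rw [hA, lam_digit p A β hp2 i hi.le, if_neg (by omega),
      pow_sub_one_digit p β i hp2 hi, Nat.choose_self]
    norm_num
  rw [hprod1] at h1
  -- Lucas for k = p^β
  have luc2 := Choose.choose_modEq_choose_mul_prod_range_choose
    (p := p) (n := lam) (k := p ^ β) (β + 1)
  have h2 : ((Nat.choose lam (p ^ β) : ℤ) : ZMod p)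
      = ((Nat.choose (lam / p ^ (β + 1)) (p ^ β / p ^ (β + 1)) *
          ∏ i ∈ Finset.range (β + 1),
            Nat.choose (lam / p ^ i % p) (p ^ β / p ^ i % p) : ℤ) : ZMod p) :=
    (ZMod.intCast_eq_intCast_iff _ _ _).mpr luc2
  push_cast at h2
  rw [Finset.prod_range_succ] at h2
  rw [Nat.div_eq_of_lt hEp, Nat.choose_zero_right] at h2
  rw [Nat.div_self (Nat.pow_pos (by omega)), Nat.mod_eq_of_lt (show (1:ℕ) < p by omega)] at h2
  rw [hA, lam_digit p A β hp2 β le_rfl, if_pos rfl, Nat.choose_one_right] at h2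
  have hprod2 : ∏ i ∈ Finset.range β,
      ((Nat.choose ((p ^ (β + 1) * A + (p * p ^ β - p ^ β - 1)) / p ^ i % p)
        (p ^ β / p ^ i % p) : ZMod p)) = 1 := by
    apply Finset.prod_eq_one
    intro i hi
    rw [Finset.mem_range] at hi
    rw [pow_digit p β i hp2 hi, Nat.choose_zero_right]
    norm_num
  rw [hprod2] at h2
  -- parity
  have hoddE : Odd (p ^ β) := hodd.pow
  have hevenE : Even (p ^ β - 1) := Nat.Odd.sub_odd hoddE odd_one
  have hcast : ((p - 2 : ℕ) : ZMod p) = -2 := by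
    rw [Nat.cast_sub hp2, ZMod.natCast_self]
    push_cast
    ring
  constructor
  · rw [hevenE.neg_one_pow, h1]
    norm_num
  · rw [hoddE.neg_one_pow, hA, h2, hcast]
    push_cast
    ring
end

section
/- Let p be an odd prime, q = p^h with h ≥ 1, r = p^k with k ≥ 1, σ an even positive integer, and λ = q r σ/2 + q(r+1)/2 + (q-3)/2. Then C(λ, 2q - 1) ≡ 0 (mod p). -/
/-- Decomposition `2ac - 1 = a(2c-1) + (a-1)` in `ℕ`. -/
lemma decomp_aux (a c : ℕ) (ha : 1 ≤ a) (hc : 1 ≤ c) :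
    2 * (a * c) - 1 = a * (2 * c - 1) + (a - 1) := by
  have h2 : a * (2 * c - 1) = a * (2 * c) - a * 1 := Nat.mul_sub ..
  have h3 : a * (2 * c) = 2 * (a * c) := by ring
  have h4 : a ≤ a * c := Nat.le_mul_of_pos_right a (by omega)
  omega

/-- If `m < p^h` and `m ≠ p^h - 1`, then some base-`p` digit of `m` below position `h`
is less than `p - 1`. -/
lemma digit_lt_aux (p : ℕ) (hp : 2 ≤ p) :
    ∀ h m : ℕ, m < p ^ h → m ≠ p ^ h - 1 → ∃ i < h, m / p ^ i % p < p - 1 := by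
  intro h
  induction h with
  | zero => intro m hm hne; simp at hm hne; omega
  | succ n ih =>
    intro m hm hne
    by_cases h0 : m % p = p - 1
    · have hdiv : m / p < p ^ n := by
        rw [Nat.div_lt_iff_lt_mul (by omega)]
        calc m < p ^ (n+1) := hm
        _ = p ^ n * p := by ring
      have hm' : m = p * (m / p) + m % p := (Nat.div_add_mod m p).symm.trans (by ring)
      have hpn : 1 ≤ p ^ n := Nat.one_le_pow _ _ (by omega)
      have hne' : m / p ≠ p ^ n - 1 := by
        intro hEq
        apply hne
        have e1 : p * (m / p) = p * p ^ n - p := by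
          rw [hEq, Nat.mul_sub, mul_one]
        have e2 : p ^ (n+1) = p * p ^ n := by ring
        have e3 : p ≤ p * p ^ n := Nat.le_mul_of_pos_right p (by omega)
        omega
      obtain ⟨i, hi, hlt⟩ := ih (m / p) hdiv hne'
      refine ⟨i + 1, by omega, ?_⟩
      have : m / p ^ (i + 1) = m / p / p ^ i := by
        rw [Nat.div_div_eq_div_mul, pow_succ, mul_comm]
      rw [this]
      exact hlt
    · exact ⟨0, by omega, by
        have := Nat.mod_lt m (show 0 < p by omega)
        simp only [pow_zero, Nat.div_one]
        omega⟩

theorem stmt_13 (p : ℕ) (hp : p.Prime) (hodd : Odd p) (h k : ℕ) (hh : 1 ≤ h) (hk : 1 ≤ k)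
    (q r : ℕ) (hq : q = p ^ h) (hr : r = p ^ k)
    (σ : ℕ) (hσ : 0 < σ) (hσe : Even σ)
    (lam : ℕ) (hlam : lam = q * r * (σ / 2) + q * ((r + 1) / 2) + (q - 3) / 2) :
    (Nat.choose lam (2 * q - 1) : ZMod p) = 0 := by
  haveI : Fact p.Prime := ⟨hp⟩
  have hp2 : 2 ≤ p := hp.two_le
  have hp3 : 3 ≤ p := by rcases hodd with ⟨t, ht⟩; omega
  -- q = p^h ≥ 3
  have hq3 : 3 ≤ q := by
    rw [hq]
    calc 3 ≤ p := hp3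
    _ = p ^ 1 := (pow_one p).symm
    _ ≤ p ^ h := Nat.pow_le_pow_right (by omega) hh
  set m : ℕ := (q - 3) / 2 with hm
  set A : ℕ := r * (σ / 2) + (r + 1) / 2 with hA
  have hlam' : lam = q * A + m := by rw [hlam, hA, hm]; ring
  have hmq : m < q - 1 := by omega
  have hmlt : m < p ^ h := by rw [← hq]; omega
  -- find a small digit of m
  obtain ⟨i, hih, hdig⟩ := digit_lt_aux p hp2 h m hmlt (by rw [← hq]; omega)
  set B : ℕ := p ^ (h - i - 1) with hB
  have hpi : 1 ≤ p ^ i := Nat.one_le_pow _ _ (by omega)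
  have hpj : 1 ≤ B := Nat.one_le_pow _ _ (by omega)
  have hpow : p ^ h = p ^ i * (p * B) := by
    rw [hB, ← pow_succ', ← pow_add]
    congr 1
    omega
  -- digit of lam at position i equals digit of m at position i
  have hlamdig : lam / p ^ i % p = m / p ^ i % p := by
    have e : lam = m + p ^ i * ((p * B) * A) := by
      rw [hlam', hq, hpow]; ring
    rw [e, Nat.add_mul_div_left _ _ (show 0 < p ^ i by omega)]
    have e2 : p * B * A = p * (B * A) := by ring
    rw [e2, Nat.add_mul_mod_self_left]
  -- digit of 2q-1 at position i equals p - 1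
  have hkdig : (2 * q - 1) / p ^ i % p = p - 1 := by
    have e0 : 2 * q - 1 = 2 * (p ^ i * (p * B)) - 1 := by rw [hq, hpow]
    rw [e0, decomp_aux _ _ hpi (Nat.mul_pos (by omega) hpj),
      Nat.mul_add_div (by omega), Nat.div_eq_of_lt (by omega), Nat.add_zero,
      decomp_aux _ _ (by omega) hpj,
      Nat.mul_add_mod, Nat.mod_eq_of_lt (by omega)]
  -- Lucas: the i-th factor vanishes
  have hmod := (Choose.choose_modEq_choose_mul_prod_range_choose
      (n := lam) (k := 2 * q - 1) (p := p) h)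
  have hzero : Nat.choose (lam / p ^ i % p) ((2 * q - 1) / p ^ i % p) = 0 := by
    rw [hlamdig, hkdig]
    exact Nat.choose_eq_zero_of_lt hdig
  have hprod : (∏ j ∈ Finset.range h,
      Nat.choose (lam / p ^ j % p) ((2 * q - 1) / p ^ j % p)) = 0 :=
    Finset.prod_eq_zero (Finset.mem_range.mpr hih) hzero
  have hz : (Nat.choose lam (2 * q - 1) : ℤ) ≡ 0 [ZMOD p] := by
    refine hmod.trans ?_
    rw [hprod]
    simp
  have := (ZMod.intCast_eq_intCast_iff _ _ _).mpr hz
  simpa using this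
end

section
/- Let p be an odd prime, q = p^h with h ≥ 1, r = p^k with k ≥ 1, and τ ≥ 0 an integer. Then ∑_{i=1}^{r-1} (-1)^{qi} C(q r (τ+1) + 2q - 3, q i) ≡ -1 (mod p). -/
open Nat

private lemma aux3 (p : ℕ) [Fact p.Prime] :
    ∀ (m s j : ℕ), 1 ≤ j → j < p ^ m → (Nat.choose (p ^ m * s) j : ℤ) ≡ 0 [ZMOD p] := by
  intro m
  induction m with
  | zero => intro s j h1 h2; rw [pow_zero] at h2; omega
  | succ m ih =>
    intro s j h1 h2
    have hp2 : 2 ≤ p := (Fact.out : p.Prime).two_le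
    have hn : p ^ (m+1) * s = p * (p ^ m * s) := by ring
    rw [hn]
    have hstep := Choose.choose_modEq_choose_mod_mul_choose_div
      (p := p) (n := p * (p ^ m * s)) (k := j)
    rw [Nat.mul_mod_right, Nat.mul_div_cancel_left _ (by omega : 0 < p)] at hstep
    rcases Nat.eq_zero_or_pos (j % p) with hj0 | hjpos
    · have hdvd : p ∣ j := Nat.dvd_of_mod_eq_zero hj0
      have hpj : p ≤ j := Nat.le_of_dvd (by omega) hdvd
      have hjp1 : 1 ≤ j / p := (Nat.one_le_div_iff (by omega)).mpr hpj
      have hjp2 : j / p < p ^ m := by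
        rw [Nat.div_lt_iff_lt_mul (by omega : 0 < p)]
        calc j < p ^ (m+1) := h2
        _ = p ^ m * p := by ring
      have h0 := ih s (j / p) hjp1 hjp2
      refine hstep.trans ?_
      rw [hj0]
      calc ((Nat.choose 0 0 * Nat.choose (p ^ m * s) (j / p) : ℕ) : ℤ)
          = (Nat.choose (p ^ m * s) (j / p) : ℤ) := by simp
        _ ≡ 0 [ZMOD p] := h0
    · refine hstep.trans ?_
      rw [Nat.choose_eq_zero_of_lt (by omega : (0:ℕ) < j % p)]
      simp

private lemma aux1 (p : ℕ) [Fact p.Prime] (a n k : ℕ) (hd : p ^ a ∣ k) :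
    (Nat.choose n k : ℤ) ≡ (Nat.choose (n / p ^ a) (k / p ^ a) : ℤ) [ZMOD p] := by
  have hp2 : 2 ≤ p := (Fact.out : p.Prime).two_le
  obtain ⟨t, rfl⟩ := hd
  have hstep := Choose.choose_modEq_choose_mul_prod_range_choose (p := p) (n := n)
    (k := p ^ a * t) a
  refine hstep.trans ?_
  have hprod : ∀ i ∈ Finset.range a, Nat.choose (n / p ^ i % p) (p ^ a * t / p ^ i % p) = 1 := by
    intro i hi
    have hia : i < a := Finset.mem_range.mp hi
    have : p ^ a * t / p ^ i = p * (p ^ (a - i - 1) * t) := by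
      rw [show p ^ a = p ^ i * (p * p ^ (a - i - 1)) by
        rw [← pow_succ', ← pow_add]; congr 1; omega]
      rw [mul_assoc, Nat.mul_div_cancel_left _ (pow_pos (by omega) i)]
      ring
    rw [this, Nat.mul_mod_right, Nat.choose_zero_right]
  rw [Finset.prod_congr rfl hprod, Finset.prod_const_one, Nat.cast_one, mul_one,
    Nat.mul_div_cancel_left _ (pow_pos (by omega) a)]

theorem stmt_14 (p : ℕ) (hp : p.Prime) (hodd : Odd p) (h k : ℕ) (hh : 1 ≤ h) (hk : 1 ≤ k)
    (q r : ℕ) (hq : q = p ^ h) (hr : r = p ^ k) (τ : ℕ) :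
    (∑ i ∈ Finset.Icc 1 (r - 1),
        (-1 : ZMod p) ^ (q * i) *
          (Nat.choose (q * r * (τ + 1) + 2 * q - 3) (q * i) : ZMod p)) = -1 := by
  haveI : Fact p.Prime := ⟨hp⟩
  have hp3 : 3 ≤ p := by
    rcases hodd with ⟨m, hm⟩
    have := hp.two_le; omega
  have hq3 : 3 ≤ q := by
    calc 3 ≤ p := hp3
    _ ≤ p ^ h := Nat.le_self_pow (by omega) p
    _ = q := hq.symm
  have hr3 : 3 ≤ r := by
    calc 3 ≤ p := hp3
    _ ≤ p ^ k := Nat.le_self_pow (by omega) p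
    _ = r := hr.symm
  set N := q * r * (τ + 1) + 2 * q - 3 with hN
  set M := r * (τ + 1) + 1 with hM
  have hNM : N = q * M + (q - 3) := by
    have h1 : q * M = q * (r * (τ + 1)) + q := by rw [hM]; ring
    have h2 : q * r * (τ + 1) = q * (r * (τ + 1)) := by ring
    omega
  have hNdiv : N / q = M := by
    rw [hNM, Nat.mul_add_div (by omega), Nat.div_eq_of_lt (by omega), Nat.add_zero]
  have hqodd : Odd q := by rw [hq]; exact hodd.pow
  have key : ∀ i ∈ Finset.Icc 1 (r - 1),
      (-1 : ZMod p) ^ (q * i) * (Nat.choose N (q * i) : ZMod p) =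
        if i = 1 then (-1 : ZMod p) else 0 := by
    intro i hi
    rw [Finset.mem_Icc] at hi
    have hstep1 : (Nat.choose N (q * i) : ℤ) ≡ (Nat.choose M i : ℤ) [ZMOD p] := by
      have := aux1 p h N (q * i) (by rw [hq]; exact Dvd.dvd.mul_right dvd_rfl i)
      rwa [← hq, hNdiv, Nat.mul_div_cancel_left _ (by omega : 0 < q)] at this
    have hM2 : M = p * (p ^ (k - 1) * (τ + 1)) + 1 := by
      have hpk : p * p ^ (k - 1) = p ^ k := by
        rw [← pow_succ']
        congr 1
        omega
      rw [hM, hr, ← hpk]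
      ring
    have hchoose : (Nat.choose M i : ℤ) ≡ (if i = 1 then 1 else 0 : ℤ) [ZMOD p] := by
      rcases eq_or_ne i 1 with h1 | h1
      · subst h1
        simp only [if_pos rfl, Nat.choose_one_right]
        rw [hM2]
        push_cast
        exact (Int.ModEq.add_right 1
          (Int.modEq_zero_iff_dvd.mpr ⟨_, rfl⟩)).trans (by norm_num)
      · rw [if_neg h1]
        have hi2 : 2 ≤ i := by omega
        have hstep := Choose.choose_modEq_choose_mod_mul_choose_div
          (p := p) (n := M) (k := i)
        have hMmod : M % p = 1 := by
          rw [hM2, Nat.mul_add_mod, Nat.mod_eq_of_lt (by omega)]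
        have hMdiv : M / p = p ^ (k - 1) * (τ + 1) := by
          rw [hM2, Nat.mul_add_div (by omega), Nat.div_eq_of_lt (by omega), Nat.add_zero]
        rw [hMmod, hMdiv] at hstep
        refine hstep.trans ?_
        rcases Nat.lt_or_ge i p with hip | hip
        · rw [Nat.mod_eq_of_lt hip, Nat.choose_eq_zero_of_lt (by omega : (1:ℕ) < i)]
          simp
        · have hdiv1 : 1 ≤ i / p := (Nat.one_le_div_iff (by omega)).mpr hip
          have hdiv2 : i / p < p ^ (k - 1) := by
            rw [Nat.div_lt_iff_lt_mul (by omega : 0 < p)]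
            calc i ≤ r - 1 := hi.2
            _ < p ^ k := by omega
            _ = p ^ (k - 1) * p := by rw [← pow_succ]; congr 1; omega
          have h0 := aux3 p (k - 1) (τ + 1) (i / p) hdiv1 hdiv2
          calc (Nat.choose 1 (i % p) : ℤ) * (Nat.choose (p ^ (k-1) * (τ+1)) (i / p) : ℤ)
              ≡ (Nat.choose 1 (i % p) : ℤ) * 0 [ZMOD p] := Int.ModEq.mul_left _ h0
            _ = 0 := by ring
    have hfinal : (Nat.choose N (q * i) : ZMod p) = if i = 1 then 1 else 0 := by
      have hc := hstep1.trans hchoose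
      have := (ZMod.intCast_eq_intCast_iff _ _ _).mpr hc
      rcases eq_or_ne i 1 with h1 | h1 <;> simp [h1] at this ⊢ <;> exact_mod_cast this
    rw [hfinal]
    rcases eq_or_ne i 1 with h1 | h1
    · subst h1
      rw [if_pos rfl, if_pos rfl, mul_one, mul_one, Odd.neg_one_pow hqodd]
    · rw [if_neg h1, if_neg h1, mul_zero]
  rw [Finset.sum_congr rfl key]
  rw [Finset.sum_ite_eq' (Finset.Icc 1 (r - 1)) 1 (fun _ => (-1 : ZMod p)),
    if_pos (Finset.mem_Icc.mpr ⟨le_refl 1, by omega⟩)]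
end

section
/- Let p be an odd prime, q = p^h with q ≥ 3, r = p^k with r ≥ 3, and τ ≥ 0. Then C(q r (τ+1) + 2q - 3, q r + q - 1) ≡ 0 (mod p). -/
theorem stmt_15 (p : ℕ) (hp : p.Prime) (hodd : Odd p) (h k : ℕ)
    (q r : ℕ) (hq : q = p ^ h) (hr : r = p ^ k) (hq3 : 3 ≤ q) (hr3 : 3 ≤ r)
    (τ : ℕ) :
    (Nat.choose (q * r * (τ + 1) + 2 * q - 3) (q * r + q - 1) : ZMod p) = 0 := by
  haveI : Fact p.Prime := ⟨hp⟩
  have hp3 : 3 ≤ p := by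
    rcases hp.two_le.lt_or_eq with h2 | h2
    · omega
    · exfalso; rw [← h2] at hodd; simp [Nat.odd_iff] at hodd
  -- h ≥ 1
  obtain ⟨h', rfl⟩ : ∃ h', h = h' + 1 := by
    cases h with
    | zero => exfalso; rw [hq, pow_zero] at hq3; omega
    | succ n => exact ⟨n, rfl⟩
  have hqp : q = p * p ^ h' := by rw [hq, pow_succ]; ring
  set A : ℕ := p ^ h' * r + p ^ h' with hA
  set B : ℕ := p ^ h' * r * (τ + 1) + 2 * p ^ h' with hB
  have hApos : 1 ≤ A := (Nat.one_le_pow _ _ hp.pos).trans (Nat.le_add_left _ _)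
  have hBpos : 1 ≤ B := by have h1 : 1 ≤ p ^ h' := Nat.one_le_pow _ _ hp.pos; omega
  have hqA : q * r + q = p * A := by rw [hqp]; ring
  have hqB : q * r * (τ + 1) + 2 * q = p * B := by rw [hqp]; ring
  have hpA : p * (A - 1) = p * A - p := by rw [Nat.mul_sub, Nat.mul_one]
  have hpB : p * (B - 1) = p * B - p := by rw [Nat.mul_sub, Nat.mul_one]
  have hpAle : p ≤ p * A := Nat.le_mul_of_pos_right p hApos
  have hpBle : p ≤ p * B := Nat.le_mul_of_pos_right p hBpos
  have hM : (q * r + q - 1) % p = p - 1 := by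
    have e : q * r + q - 1 = p * (A - 1) + (p - 1) := by omega
    rw [e, Nat.mul_add_mod, Nat.mod_eq_of_lt (by omega)]
  have hN : (q * r * (τ + 1) + 2 * q - 3) % p = p - 3 := by
    have e : q * r * (τ + 1) + 2 * q - 3 = p * (B - 1) + (p - 3) := by omega
    rw [e, Nat.mul_add_mod, Nat.mod_eq_of_lt (by omega)]
  have key := Choose.choose_modEq_choose_mod_mul_choose_div_nat
    (p := p) (n := q * r * (τ + 1) + 2 * q - 3) (k := q * r + q - 1)
  rw [hM, hN, Nat.choose_eq_zero_of_lt (show p - 3 < p - 1 by omega), zero_mul] at key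
  rw [ZMod.natCast_eq_zero_iff]
  exact (Nat.modEq_zero_iff_dvd).mp key
end

section
/- Let p be an odd prime, l ≥ 1, and σ' a positive integer not divisible by p, and set σ = p^l σ'. For an integer i with 0 ≤ i ≤ p^l - 1: C((σ + p^l)/2, i) ≢ 0 (mod p) only if i = 0, and C((σ + p^l)/2, i+1) ≢ 0 (mod p) only if i = p^l - 1; moreover C(p^l (σ'+1)/2, p^l) ≡ (σ'+1)/2 (mod p). -/
private lemma lucas_step (p : ℕ) [Fact p.Prime] (n k : ℕ) :
    ((Nat.choose n k : ZMod p)) =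
      (Nat.choose (n % p) (k % p) : ZMod p) * (Nat.choose (n / p) (k / p) : ZMod p) := by
  have h := Choose.choose_modEq_choose_mod_mul_choose_div_nat (n := n) (k := k) (p := p)
  have := (ZMod.natCast_eq_natCast_iff _ _ _).mpr h
  simpa using this

private lemma aux_zero (p : ℕ) [Fact p.Prime] :
    ∀ l m k : ℕ, 0 < k → k < p ^ l → (Nat.choose (p ^ l * m) k : ZMod p) = 0 := by
  intro l
  induction l with
  | zero => intro m k hk hk'; simp at hk'; omega
  | succ l ih =>
    intro m k hk hk'
    have hp : 0 < p := (Fact.out : p.Prime).pos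
    have heq : p ^ (l + 1) * m = p * (p ^ l * m) := by ring
    rw [lucas_step p, heq, Nat.mul_mod_right, Nat.mul_div_cancel_left _ hp]
    rcases Nat.eq_zero_or_pos (k % p) with h | h
    · have hdvd : p ∣ k := Nat.dvd_of_mod_eq_zero h
      have hkp : 0 < k / p := Nat.div_pos (Nat.le_of_dvd hk hdvd) hp
      have hkp' : k / p < p ^ l := by
        rw [Nat.div_lt_iff_lt_mul hp]
        calc k < p ^ (l + 1) := hk'
          _ = p ^ l * p := by ring
      rw [ih m (k / p) hkp hkp', mul_zero]
    · rw [Nat.choose_eq_zero_of_lt h]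
      simp

private lemma aux_top (p : ℕ) [Fact p.Prime] :
    ∀ l m : ℕ, (Nat.choose (p ^ l * m) (p ^ l) : ZMod p) = (m : ZMod p) := by
  intro l
  induction l with
  | zero => intro m; simp
  | succ l ih =>
    intro m
    have hp : 0 < p := (Fact.out : p.Prime).pos
    have heq : p ^ (l + 1) * m = p * (p ^ l * m) := by ring
    have heq' : p ^ (l + 1) = p * p ^ l := by ring
    rw [lucas_step p, heq, heq', Nat.mul_mod_right, Nat.mul_mod_right,
      Nat.mul_div_cancel_left _ hp, Nat.mul_div_cancel_left _ hp]
    simp [ih m]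

theorem stmt_17 (p : ℕ) (hp : p.Prime) (hodd : Odd p) (l : ℕ) (hl : 1 ≤ l)
    (σ' : ℕ) (hσ' : 0 < σ') (hσ'p : ¬ p ∣ σ') (hσ'odd : Odd σ')
    (σ : ℕ) (hσ : σ = p ^ l * σ')
    (i : ℕ) (hi : i ≤ p ^ l - 1) :
    ((Nat.choose ((σ + p ^ l) / 2) i : ZMod p) ≠ 0 → i = 0) ∧
    ((Nat.choose ((σ + p ^ l) / 2) (i + 1) : ZMod p) ≠ 0 → i = p ^ l - 1) ∧
    (Nat.choose (p ^ l * ((σ' + 1) / 2)) (p ^ l) : ZMod p) = (((σ' + 1) / 2 : ℕ) : ZMod p) := by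
  haveI : Fact p.Prime := ⟨hp⟩
  have hp0 : 0 < p := hp.pos
  have hpl : 0 < p ^ l := pow_pos hp0 l
  have h2 : 2 ∣ σ' + 1 := by
    obtain ⟨c, hc⟩ := hσ'odd; omega
  have hhalf : (σ + p ^ l) / 2 = p ^ l * ((σ' + 1) / 2) := by
    rw [hσ, ← Nat.mul_add_one, Nat.mul_div_assoc _ h2]
  have hi' : i < p ^ l := by omega
  refine ⟨?_, ?_, aux_top p l _⟩
  · intro h
    by_contra hne
    exact h (hhalf ▸ aux_zero p l _ i (Nat.pos_of_ne_zero hne) hi')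
  · intro h
    by_contra hne
    have hlt : i + 1 < p ^ l := by omega
    exact h (hhalf ▸ aux_zero p l _ (i + 1) (Nat.succ_pos i) hlt)
end
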